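/- arXiv:2103.04471 — 4 statements merged into one kernel-verified Lean document; each statement's English description precedes it below -/
import Mathlib

section
/- For a flag triple (E, F, G) in an n-dimensional vector space V, the following are equivalent: (a) the sum E^(a) + F^(b) + G^(c) equals V and is direct whenever a + b + c = n; (b) dim(E^(a) + F^(b) + G^(c)) = min(a+b+c, n) for all 0 ≤ a, b, c ≤ n. -/
/-!
Three subspaces of a finite-dimensional space form a direct sum exactly when the dimension of
their sum is the sum of their dimensions. Hence (b) at `a + b + c = n` is (a). Conversely, if
`a + b + c ≤ n`, enlarging `a` to `n - b - c` keeps the sum direct; if `a + b + c > n`, shrinking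
`b` and `c` until the indices add up to `n` gives a sum which is already `V`.
-/

open Module Submodule

namespace Submodule

variable {K V : Type*} [DivisionRing K] [AddCommGroup V] [Module K V] [FiniteDimensional K V]

theorem finrank_sup_eq_add_of_disjoint {s t : Submodule K V} (h : Disjoint s t) :
    finrank K ↥(s ⊔ t) = finrank K s + finrank K t := by
  have := finrank_sup_add_finrank_inf_eq s t
  rwa [h.eq_bot, finrank_bot, add_zero] at this

theorem disjoint_of_finrank_add_finrank_le {s t : Submodule K V}
    (h : finrank K s + finrank K t ≤ finrank K ↥(s ⊔ t)) : Disjoint s t := by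
  have := finrank_sup_add_finrank_inf_eq s t
  exact disjoint_iff.mpr (finrank_eq_zero.mp (by omega))

theorem disjoint_sup_of_finrank_add_finrank_add_finrank_le {A B C : Submodule K V}
    (h : finrank K A + finrank K B + finrank K C ≤ finrank K ↥(A ⊔ B ⊔ C)) :
    Disjoint A (B ⊔ C) := by
  have := finrank_add_le_finrank_add_finrank B C
  exact disjoint_of_finrank_add_finrank_le (by rw [← sup_assoc]; omega)

theorem iSupIndep_fin_three_iff_finrank_sup_eq (A B C : Submodule K V) :
    iSupIndep ![A, B, C] ↔
      finrank K ↥(A ⊔ B ⊔ C) = finrank K A + finrank K B + finrank K C := by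
  simp only [iSupIndep_fin_three, Matrix.cons_val_zero, Matrix.cons_val_one,
    Matrix.cons_val_two, Matrix.head_cons, Matrix.tail_cons]
  constructor
  · rintro ⟨-, hB, hC⟩
    rw [finrank_sup_eq_add_of_disjoint hC.symm,
      finrank_sup_eq_add_of_disjoint (hB.mono_right le_sup_right).symm]
  · intro h
    refine ⟨disjoint_sup_of_finrank_add_finrank_add_finrank_le h.ge,
      disjoint_sup_of_finrank_add_finrank_add_finrank_le ?_,
      disjoint_sup_of_finrank_add_finrank_add_finrank_le ?_⟩
    · rw [show B ⊔ C ⊔ A = A ⊔ B ⊔ C by ac_rfl]; omega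
    · rw [show C ⊔ A ⊔ B = A ⊔ B ⊔ C by ac_rfl]; omega

end Submodule

theorem maximum_span_property_equiv {V : Type*} [AddCommGroup V] [Module ℂ V]
    [FiniteDimensional ℂ V]
    (n : ℕ) (hn : Module.finrank ℂ V = n)
    (E F G : ℕ → Submodule ℂ V)
    (hEmono : Monotone E) (hFmono : Monotone F) (hGmono : Monotone G)
    (hEdim : ∀ a ≤ n, Module.finrank ℂ (E a) = a)
    (hFdim : ∀ a ≤ n, Module.finrank ℂ (F a) = a)
    (hGdim : ∀ a ≤ n, Module.finrank ℂ (G a) = a) :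
    ((∀ a b c, a + b + c = n →
        iSupIndep ![E a, F b, G c] ∧ E a ⊔ F b ⊔ G c = ⊤) ↔
      (∀ a b c, a ≤ n → b ≤ n → c ≤ n →
        Module.finrank ℂ ↥(E a ⊔ F b ⊔ G c) = min (a + b + c) n)) := by
  constructor
  · intro h a b c ha hb hc
    rcases le_or_gt (a + b + c) n with hle | hlt
    · have hind : iSupIndep ![E a, F b, G c] :=
        (h (n - b - c) b c (by omega)).1.mono fun i => by
          fin_cases i <;> simp [hEmono (show a ≤ n - b - c by omega)]
      rw [(iSupIndep_fin_three_iff_finrank_sup_eq _ _ _).1 hind, hEdim a ha, hFdim b hb,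
        hGdim c hc]
      omega
    · have htop : E a ⊔ F b ⊔ G c = ⊤ := by
        set b' := min b (n - a)
        refine top_unique ((h a b' (n - a - b') (by omega)).2 ▸ ?_)
        exact sup_le_sup (sup_le_sup_left (hFmono (min_le_left _ _)) _) (hGmono (by omega))
      rw [htop, finrank_top, hn]
      omega
  · intro h a b c habc
    have hdim : finrank ℂ ↥(E a ⊔ F b ⊔ G c) = n := by
      rw [h a b c (by omega) (by omega) (by omega)]; omega
    refine ⟨(iSupIndep_fin_three_iff_finrank_sup_eq _ _ _).2 ?_,
      eq_top_of_finrank_eq (hdim.trans hn.symm)⟩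
    rw [hdim, hEdim a (by omega), hFdim b (by omega), hGdim c (by omega), habc]
end

section
/- Let (E, F, G) be a maximum span flag triple in an n-dimensional complex vector space V, and let σ = (σ_1, …, σ_n) be a snake in the discrete triangle Θ_{n−1} (so σ_k = (k−1, β_k, γ_k) with β_k ≥ β_{k+1}, γ_k ≥ γ_{k+1}). Then the dual space decomposes as the direct sum V* = ⊕_{k=1}^n L_{σ_k}, where L_(α,β,γ) = (E^(α) ⊕ F^(β) ⊕ G^(γ))^⊥. -/
open Module Submodule

theorem snake_line_decomposition_of_dual {V : Type*} [AddCommGroup V] [Module ℂ V]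
    [FiniteDimensional ℂ V]
    (n : ℕ) (hn : Module.finrank ℂ V = n)
    (E F G : ℕ → Submodule ℂ V)
    (hEmono : Monotone E) (hFmono : Monotone F) (hGmono : Monotone G)
    (hEdim : ∀ a ≤ n, Module.finrank ℂ (E a) = a)
    (hFdim : ∀ a ≤ n, Module.finrank ℂ (F a) = a)
    (hGdim : ∀ a ≤ n, Module.finrank ℂ (G a) = a)
    (hmax : ∀ a b c, a ≤ n → b ≤ n → c ≤ n →
      Module.finrank ℂ ↥(E a ⊔ F b ⊔ G c) = min (a + b + c) n)
    (β γ : ℕ → ℕ)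
    (hsnake : ∀ k < n, k + β k + γ k = n - 1)
    (hβ : ∀ k, k + 1 < n → β (k + 1) ≤ β k)
    (hγ : ∀ k, k + 1 < n → γ (k + 1) ≤ γ k)
    (L : Fin n → Submodule ℂ (Module.Dual ℂ V))
    (hL : ∀ k : Fin n, L k = (E (k : ℕ) ⊔ F (β (k : ℕ)) ⊔ G (γ (k : ℕ))).dualAnnihilator) :
    iSupIndep L ∧ (⨆ k, L k) = ⊤ := by
  rcases Nat.eq_zero_or_pos n with h0 | hpos
  · subst h0
    have hsub : Subsingleton V := Module.finrank_zero_iff.mp hn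
    have hsub' : Subsingleton (Module.Dual ℂ V) := by
      constructor
      intro f g
      ext v
      rw [Subsingleton.elim v (0 : V)]
      simp
    constructor
    · intro i; exact i.elim0
    · exact Subsingleton.elim _ _
  -- basic facts
  have hE0 : E 0 = ⊥ := Submodule.finrank_eq_zero.mp (hEdim 0 (Nat.zero_le n))
  have hF0 : F 0 = ⊥ := Submodule.finrank_eq_zero.mp (hFdim 0 (Nat.zero_le n))
  have hG0 : G 0 = ⊥ := Submodule.finrank_eq_zero.mp (hGdim 0 (Nat.zero_le n))
  set W : ℕ → Submodule ℂ V := fun j => E j ⊔ F (β j) ⊔ G (γ j) with hW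
  set C : ℕ → Submodule ℂ V := fun m => F (β m) ⊔ G (γ m) with hC
  have hβn : ∀ k < n, β k ≤ n := fun k hk => by have := hsnake k hk; omega
  have hγn : ∀ k < n, γ k ≤ n := fun k hk => by have := hsnake k hk; omega
  -- extended monotonicity of β, γ
  have hβle : ∀ k, k < n → ∀ j, j ≤ k → β k ≤ β j := by
    intro k
    induction k with
    | zero => intro _ j hj; rw [Nat.le_zero.mp hj]
    | succ m ih =>
      intro hk j hj
      rcases Nat.eq_or_lt_of_le hj with h | h
      · rw [h]
      · exact (hβ m hk).trans (ih (by omega) j (by omega))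
  have hγle : ∀ k, k < n → ∀ j, j ≤ k → γ k ≤ γ j := by
    intro k
    induction k with
    | zero => intro _ j hj; rw [Nat.le_zero.mp hj]
    | succ m ih =>
      intro hk j hj
      rcases Nat.eq_or_lt_of_le hj with h | h
      · rw [h]
      · exact (hγ m hk).trans (ih (by omega) j (by omega))
  -- dimension of W k
  have hWdim : ∀ k < n, finrank ℂ (W k) = n - 1 := by
    intro k hk
    have h := hmax k (β k) (γ k) (le_of_lt hk) (hβn k hk) (hγn k hk)
    have h2 := hsnake k hk
    show finrank ℂ ↥(E k ⊔ F (β k) ⊔ G (γ k)) = n - 1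
    rw [h, h2]; omega
  -- dimension of C m
  have hCdim : ∀ m < n, finrank ℂ (C m) = n - 1 - m := by
    intro m hm
    have h := hmax 0 (β m) (γ m) (Nat.zero_le n) (hβn m hm) (hγn m hm)
    rw [hE0, bot_sup_eq] at h
    have h2 := hsnake m hm
    show finrank ℂ ↥(F (β m) ⊔ G (γ m)) = n - 1 - m
    rw [h]; omega
  -- E (k+1) ⊓ W k = E k
  have hEstep : ∀ k < n, E (k + 1) ⊓ W k = E k := by
    intro k hk
    have hsupeq : E (k + 1) ⊔ W k = E (k + 1) ⊔ F (β k) ⊔ G (γ k) := by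
      show E (k + 1) ⊔ (E k ⊔ F (β k) ⊔ G (γ k)) = E (k + 1) ⊔ F (β k) ⊔ G (γ k)
      apply le_antisymm
      · refine sup_le (le_sup_of_le_left le_sup_left) (sup_le (sup_le ?_ ?_) ?_)
        · exact le_sup_of_le_left (le_sup_of_le_left (hEmono (Nat.le_succ k)))
        · exact le_sup_of_le_left le_sup_right
        · exact le_sup_right
      · refine sup_le (sup_le le_sup_left ?_) ?_
        · exact le_sup_of_le_right (le_sup_of_le_left le_sup_right)
        · exact le_sup_of_le_right le_sup_right
    have hsupdim : finrank ℂ ↥(E (k + 1) ⊔ W k) = n := by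
      rw [hsupeq, hmax (k+1) (β k) (γ k) hk (hβn k hk) (hγn k hk)]
      have := hsnake k hk; omega
    have key := Submodule.finrank_sup_add_finrank_inf_eq (E (k + 1)) (W k)
    rw [hsupdim, hEdim (k+1) hk, hWdim k hk] at key
    have hinfdim : finrank ℂ ↥(E (k + 1) ⊓ W k) = k := by omega
    have hle : E k ≤ E (k + 1) ⊓ W k :=
      le_inf (hEmono (Nat.le_succ k))
        (show E k ≤ E k ⊔ F (β k) ⊔ G (γ k) from le_sup_of_le_left le_sup_left)
    exact (Submodule.eq_of_le_of_finrank_le hle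
      (by rw [hinfdim, hEdim k (le_of_lt hk)])).symm
  -- C m ⊓ W (m+1) = C (m+1)
  have hCstep : ∀ m, m + 1 < n → C m ⊓ W (m + 1) = C (m + 1) := by
    intro m hm
    have hm' : m < n := by omega
    have hsupeq : C m ⊔ W (m + 1) = E (m + 1) ⊔ F (β m) ⊔ G (γ m) := by
      show F (β m) ⊔ G (γ m) ⊔ (E (m + 1) ⊔ F (β (m + 1)) ⊔ G (γ (m + 1)))
          = E (m + 1) ⊔ F (β m) ⊔ G (γ m)
      apply le_antisymm
      · refine sup_le (sup_le ?_ ?_) (sup_le (sup_le ?_ ?_) ?_)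
        · exact le_sup_of_le_left le_sup_right
        · exact le_sup_right
        · exact le_sup_of_le_left le_sup_left
        · exact le_sup_of_le_left (le_sup_of_le_right (hFmono (hβ m hm)))
        · exact le_sup_of_le_right (hGmono (hγ m hm))
      · refine sup_le (sup_le ?_ ?_) ?_
        · exact le_sup_of_le_right (le_sup_of_le_left le_sup_left)
        · exact le_sup_of_le_left le_sup_left
        · exact le_sup_of_le_left le_sup_right
    have hsupdim : finrank ℂ ↥(C m ⊔ W (m + 1)) = n := by
      rw [hsupeq, hmax (m+1) (β m) (γ m) (by omega) (hβn m hm') (hγn m hm')]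
      have := hsnake m hm'; omega
    have key := Submodule.finrank_sup_add_finrank_inf_eq (C m) (W (m + 1))
    rw [hsupdim, hCdim m hm', hWdim (m+1) hm] at key
    have hle : C (m + 1) ≤ C m ⊓ W (m + 1) := by
      refine le_inf ?_ ?_
      · show F (β (m + 1)) ⊔ G (γ (m + 1)) ≤ F (β m) ⊔ G (γ m)
        exact sup_le (le_sup_of_le_left (hFmono (hβ m hm)))
          (le_sup_of_le_right (hGmono (hγ m hm)))
      · show F (β (m + 1)) ⊔ G (γ (m + 1)) ≤ E (m + 1) ⊔ F (β (m + 1)) ⊔ G (γ (m + 1))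
        exact sup_le (le_sup_of_le_left le_sup_right) le_sup_right
    refine (Submodule.eq_of_le_of_finrank_le hle ?_).symm
    rw [hCdim (m+1) hm]; omega
  -- infimum of all W is ⊥
  have hchain : ∀ m < n, (⨅ j : Fin n, W (j : ℕ)) ≤ C m := by
    intro m
    induction m with
    | zero =>
      intro h0
      have h1 : (⨅ j : Fin n, W (j : ℕ)) ≤ W 0 := iInf_le _ (⟨0, hpos⟩ : Fin n)
      have h2 : W 0 = C 0 := by
        show E 0 ⊔ F (β 0) ⊔ G (γ 0) = F (β 0) ⊔ G (γ 0)
        rw [hE0, bot_sup_eq]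
      rwa [h2] at h1
    | succ m ih =>
      intro h
      have h1 : (⨅ j : Fin n, W (j : ℕ)) ≤ C m ⊓ W (m + 1) :=
        le_inf (ih (by omega)) (iInf_le _ (⟨m + 1, h⟩ : Fin n))
      rwa [hCstep m h] at h1
  have hInfBot : (⨅ j : Fin n, W (j : ℕ)) = ⊥ := by
    have h1 := hchain (n - 1) (by omega)
    have h2 : β (n - 1) = 0 ∧ γ (n - 1) = 0 := by
      have := hsnake (n - 1) (by omega); omega
    have h3 : C (n - 1) = ⊥ := by
      show F (β (n - 1)) ⊔ G (γ (n - 1)) = ⊥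
      rw [h2.1, h2.2, hF0, hG0, sup_idem]
    rw [h3] at h1
    exact le_bot_iff.mp h1
  -- the key existence: a complement line inside all other W's
  have hkey : ∀ i : Fin n, ∃ T : Submodule ℂ V,
      (∀ j : Fin n, j ≠ i → T ≤ W (j : ℕ)) ∧ W (i : ℕ) ⊔ T = ⊤ := by
    intro i
    have hin : (i : ℕ) < n := i.isLt
    rcases Nat.eq_zero_or_pos (i : ℕ) with hi0 | hipos
    · refine ⟨E 1, ?_, ?_⟩
      · intro j hj
        have hj1 : 1 ≤ (j : ℕ) := by
          rcases Nat.eq_zero_or_pos (j : ℕ) with h | h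
          · exact absurd (Fin.ext (by omega) : j = i) hj
          · omega
        show E 1 ≤ E (j : ℕ) ⊔ F (β (j : ℕ)) ⊔ G (γ (j : ℕ))
        exact le_sup_of_le_left (le_sup_of_le_left (hEmono hj1))
      · have hdisj : E 1 ⊓ W 0 = ⊥ := by
          have := hEstep 0 hpos; rwa [hE0] at this
        have key := Submodule.finrank_sup_add_finrank_inf_eq (W 0) (E 1)
        rw [inf_comm] at hdisj
        rw [hdisj, finrank_bot, hWdim 0 hpos, hEdim 1 hpos] at key
        rw [hi0]
        apply Submodule.eq_top_of_finrank_eq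
        rw [hn]; omega
    · obtain ⟨m, hm⟩ : ∃ m, (i : ℕ) = m + 1 := ⟨(i : ℕ) - 1, by omega⟩
      have hm1 : m + 1 < n := by omega
      have hm' : m < n := by omega
      have hm2 : m + 2 ≤ n := by omega
      refine ⟨C m ⊓ E (m + 2), ?_, ?_⟩
      · intro j hj
        have hjne : (j : ℕ) ≠ (i : ℕ) := fun h => hj (Fin.ext h)
        rcases Nat.lt_or_ge (j : ℕ) (m + 1) with hjm | hjm
        · refine inf_le_left.trans ?_
          show F (β m) ⊔ G (γ m) ≤ E (j : ℕ) ⊔ F (β (j : ℕ)) ⊔ G (γ (j : ℕ))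
          refine sup_le ?_ ?_
          · exact le_sup_of_le_left
              (le_sup_of_le_right (hFmono (hβle m hm' (j : ℕ) (by omega))))
          · exact le_sup_of_le_right (hGmono (hγle m hm' (j : ℕ) (by omega)))
        · have hjm2 : m + 2 ≤ (j : ℕ) := by omega
          refine inf_le_right.trans ?_
          show E (m + 2) ≤ E (j : ℕ) ⊔ F (β (j : ℕ)) ⊔ G (γ (j : ℕ))
          exact le_sup_of_le_left (le_sup_of_le_left (hEmono hjm2))
      · -- dimension of C m ⊔ E (m+2) is n
        have hsupCE : C m ⊔ E (m + 2) = E (m + 2) ⊔ F (β m) ⊔ G (γ m) := by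
          show F (β m) ⊔ G (γ m) ⊔ E (m + 2) = E (m + 2) ⊔ F (β m) ⊔ G (γ m)
          rw [sup_comm, ← sup_assoc]
        have hsupCEdim : finrank ℂ ↥(C m ⊔ E (m + 2)) = n := by
          rw [hsupCE, hmax (m+2) (β m) (γ m) hm2 (hβn m hm') (hγn m hm')]
          have := hsnake m hm'; omega
        have keyT := Submodule.finrank_sup_add_finrank_inf_eq (C m) (E (m + 2))
        rw [hsupCEdim, hCdim m hm', hEdim (m+2) hm2] at keyT
        have hTdim : finrank ℂ ↥(C m ⊓ E (m + 2)) = 1 := by omega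
        -- E (m+1) ⊓ C m = ⊥
        have hECsup : E (m + 1) ⊔ C m = E (m + 1) ⊔ F (β m) ⊔ G (γ m) :=
          (sup_assoc (E (m + 1)) (F (β m)) (G (γ m))).symm
        have hECsupdim : finrank ℂ ↥(E (m + 1) ⊔ C m) = n := by
          rw [hECsup, hmax (m+1) (β m) (γ m) (by omega) (hβn m hm') (hγn m hm')]
          have := hsnake m hm'; omega
        have keyEC := Submodule.finrank_sup_add_finrank_inf_eq (E (m + 1)) (C m)
        rw [hECsupdim, hEdim (m+1) (by omega), hCdim m hm'] at keyEC
        have hEC : E (m + 1) ⊓ C m = ⊥ :=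
          Submodule.finrank_eq_zero.mp (by omega)
        -- T ⊓ W (m+1) = ⊥
        have hTW : (C m ⊓ E (m + 2)) ⊓ W (m + 1) = ⊥ := by
          have h1 : (C m ⊓ E (m + 2)) ⊓ W (m + 1) ≤ (E (m + 2) ⊓ W (m + 1)) ⊓ C m :=
            le_inf (le_inf (inf_le_left.trans inf_le_right) inf_le_right)
              (inf_le_left.trans inf_le_left)
          rw [hEstep (m + 1) hm1, hEC] at h1
          exact le_bot_iff.mp h1
        have keyFin := Submodule.finrank_sup_add_finrank_inf_eq (W (m + 1)) (C m ⊓ E (m + 2))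
        rw [inf_comm] at hTW
        rw [hTW, finrank_bot, hWdim (m+1) hm1, hTdim] at keyFin
        rw [hm]
        apply Submodule.eq_top_of_finrank_eq
        rw [hn]; omega
  constructor
  · intro i
    obtain ⟨T, hT1, hT2⟩ := hkey i
    have hsup : (⨆ j, ⨆ _ : j ≠ i, L j) ≤ T.dualAnnihilator := by
      refine iSup₂_le fun j hj => ?_
      rw [hL j]
      exact Submodule.dualAnnihilator_anti (hT1 j hj)
    rw [disjoint_iff_inf_le]
    calc L i ⊓ (⨆ j, ⨆ _ : j ≠ i, L j)
        ≤ (W (i : ℕ)).dualAnnihilator ⊓ T.dualAnnihilator :=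
          inf_le_inf (le_of_eq (hL i)) hsup
      _ = (W (i : ℕ) ⊔ T).dualAnnihilator :=
          (Submodule.dualAnnihilator_sup_eq _ _).symm
      _ = ⊥ := by rw [hT2, Submodule.dualAnnihilator_top]
  · have h1 : (⨆ k, L k) = ⨆ k : Fin n, (W (k : ℕ)).dualAnnihilator :=
      iSup_congr fun k => hL k
    rw [h1, ← Subspace.dualAnnihilator_iInf_eq, hInfBot, Submodule.dualAnnihilator_bot]
end

section
/- Let (E, F, G) be a maximum span flag triple in an n-dimensional complex vector space V and let σ_{k+1} = (k, β, γ), σ^left = (k−1, β+1, γ), σ^right = (k−1, β, γ+1) be vertices in Θ_{n−1} with k + β + γ = n − 1. Then the three lines L_{σ_{k+1}}, L_{σ^left}, L_{σ^right} in V* are pairwise distinct and all lie in the 2-dimensional subspace (E^(k−1) ⊕ F^(β) ⊕ G^(γ))^⊥. Consequently, for any nonzero u ∈ L_{σ_{k+1}} there exist unique nonzero u^left ∈ L_{σ^left} and u^right ∈ L_{σ^right} with u + u^left + u^right = 0. -/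
open Module

lemma finrank_dualAnnihilator_aux {V : Type*} [AddCommGroup V] [Module ℂ V]
    [FiniteDimensional ℂ V] (W : Submodule ℂ V) :
    Module.finrank ℂ W.dualAnnihilator = Module.finrank ℂ V - Module.finrank ℂ W := by
  have h1 := (Submodule.dualQuotEquivDualAnnihilator W).finrank_eq
  have h2 := W.finrank_quotient_add_finrank
  have h3 : Module.finrank ℂ (Module.Dual ℂ (V ⧸ W)) = Module.finrank ℂ (V ⧸ W) :=
    Subspace.dual_finrank_eq
  omega

theorem snake_move_coplanar_lines {V : Type*} [AddCommGroup V] [Module ℂ V]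
    [FiniteDimensional ℂ V]
    (n : ℕ) (hn : Module.finrank ℂ V = n)
    (E F G : ℕ → Submodule ℂ V)
    (hEmono : Monotone E) (hFmono : Monotone F) (hGmono : Monotone G)
    (hEdim : ∀ a ≤ n, Module.finrank ℂ (E a) = a)
    (hFdim : ∀ a ≤ n, Module.finrank ℂ (F a) = a)
    (hGdim : ∀ a ≤ n, Module.finrank ℂ (G a) = a)
    (hmax : ∀ a b c, a ≤ n → b ≤ n → c ≤ n →
      Module.finrank ℂ ↥(E a ⊔ F b ⊔ G c) = min (a + b + c) n)
    (k β γ : ℕ) (hk : 1 ≤ k) (h : k + β + γ = n - 1) (hn1 : 1 ≤ n)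
    (L Lleft Lright P : Submodule ℂ (Module.Dual ℂ V))
    (hL : L = (E k ⊔ F β ⊔ G γ).dualAnnihilator)
    (hLleft : Lleft = (E (k - 1) ⊔ F (β + 1) ⊔ G γ).dualAnnihilator)
    (hLright : Lright = (E (k - 1) ⊔ F β ⊔ G (γ + 1)).dualAnnihilator)
    (hP : P = (E (k - 1) ⊔ F β ⊔ G γ).dualAnnihilator) :
    L ≠ Lleft ∧ L ≠ Lright ∧ Lleft ≠ Lright ∧
    L ≤ P ∧ Lleft ≤ P ∧ Lright ≤ P ∧ Module.finrank ℂ P = 2 ∧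
    ∀ u ∈ L, u ≠ 0 →
      ∃! p : Module.Dual ℂ V × Module.Dual ℂ V,
        p.1 ∈ Lleft ∧ p.2 ∈ Lright ∧ p.1 ≠ 0 ∧ p.2 ≠ 0 ∧ u + p.1 + p.2 = 0 := by
  -- basic arithmetic facts
  have hksum : k + β + γ + 1 = n := by omega
  have hkn : k ≤ n := by omega
  have hbn : β ≤ n := by omega
  have hgn : γ ≤ n := by omega
  have hk1n : k - 1 ≤ n := by omega
  have hb1n : β + 1 ≤ n := by omega
  have hg1n : γ + 1 ≤ n := by omega
  have hk1 : k - 1 + 1 = k := by omega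
  -- finrank of the three hyperplanes and of the (n-2)-plane
  have dW : Module.finrank ℂ ↥(E k ⊔ F β ⊔ G γ) = n - 1 := by
    rw [hmax k β γ hkn hbn hgn, h]; omega
  have dWl : Module.finrank ℂ ↥(E (k-1) ⊔ F (β+1) ⊔ G γ) = n - 1 := by
    rw [hmax _ _ _ hk1n hb1n hgn]; omega
  have dWr : Module.finrank ℂ ↥(E (k-1) ⊔ F β ⊔ G (γ+1)) = n - 1 := by
    rw [hmax _ _ _ hk1n hbn hg1n]; omega
  have dWp : Module.finrank ℂ ↥(E (k-1) ⊔ F β ⊔ G γ) = n - 2 := by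
    rw [hmax _ _ _ hk1n hbn hgn]; omega
  have dL : Module.finrank ℂ L = 1 := by
    rw [hL, finrank_dualAnnihilator_aux, dW, hn]; omega
  have dLl : Module.finrank ℂ Lleft = 1 := by
    rw [hLleft, finrank_dualAnnihilator_aux, dWl, hn]; omega
  have dLr : Module.finrank ℂ Lright = 1 := by
    rw [hLright, finrank_dualAnnihilator_aux, dWr, hn]; omega
  have dP : Module.finrank ℂ P = 2 := by
    rw [hP, finrank_dualAnnihilator_aux, dWp, hn]; omega
  -- the inclusions into P
  have hsubE : E (k-1) ≤ E k := hEmono (by omega)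
  have hsubF : F β ≤ F (β+1) := hFmono (by omega)
  have hsubG : G γ ≤ G (γ+1) := hGmono (by omega)
  have hLP : L ≤ P := by
    rw [hL, hP]
    exact Submodule.dualAnnihilator_anti (sup_le_sup (sup_le_sup hsubE le_rfl) le_rfl)
  have hLlP : Lleft ≤ P := by
    rw [hLleft, hP]
    exact Submodule.dualAnnihilator_anti (sup_le_sup (sup_le_sup le_rfl hsubF) le_rfl)
  have hLrP : Lright ≤ P := by
    rw [hLright, hP]
    exact Submodule.dualAnnihilator_anti (sup_le_sup le_rfl hsubG)
  -- pairwise trivial intersections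
  have topF : E k ⊔ F (β+1) ⊔ G γ = ⊤ := by
    apply Submodule.eq_top_of_finrank_eq
    rw [hmax _ _ _ hkn hb1n hgn, hn]; omega
  have topG : E k ⊔ F β ⊔ G (γ+1) = ⊤ := by
    apply Submodule.eq_top_of_finrank_eq
    rw [hmax _ _ _ hkn hbn hg1n, hn]; omega
  have topFG : E (k-1) ⊔ F (β+1) ⊔ G (γ+1) = ⊤ := by
    apply Submodule.eq_top_of_finrank_eq
    rw [hmax _ _ _ hk1n hb1n hg1n, hn]; omega
  have iLLl : L ⊓ Lleft = ⊥ := by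
    rw [hL, hLleft, ← Submodule.dualAnnihilator_sup_eq]
    have : (E k ⊔ F β ⊔ G γ) ⊔ (E (k-1) ⊔ F (β+1) ⊔ G γ) = ⊤ := by
      rw [eq_top_iff, ← topF]
      refine sup_le (sup_le ?_ ?_) ?_
      · exact le_sup_of_le_left (le_sup_of_le_left le_sup_left)
      · exact le_sup_of_le_right (le_sup_of_le_left le_sup_right)
      · exact le_sup_of_le_left le_sup_right
    rw [this, Submodule.dualAnnihilator_top]
  have iLLr : L ⊓ Lright = ⊥ := by
    rw [hL, hLright, ← Submodule.dualAnnihilator_sup_eq]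
    have : (E k ⊔ F β ⊔ G γ) ⊔ (E (k-1) ⊔ F β ⊔ G (γ+1)) = ⊤ := by
      rw [eq_top_iff, ← topG]
      refine sup_le (sup_le ?_ ?_) ?_
      · exact le_sup_of_le_left (le_sup_of_le_left le_sup_left)
      · exact le_sup_of_le_left (le_sup_of_le_left le_sup_right)
      · exact le_sup_of_le_right le_sup_right
    rw [this, Submodule.dualAnnihilator_top]
  have iLlLr : Lleft ⊓ Lright = ⊥ := by
    rw [hLleft, hLright, ← Submodule.dualAnnihilator_sup_eq]
    have : (E (k-1) ⊔ F (β+1) ⊔ G γ) ⊔ (E (k-1) ⊔ F β ⊔ G (γ+1)) = ⊤ := by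
      rw [eq_top_iff, ← topFG]
      refine sup_le (sup_le ?_ ?_) ?_
      · exact le_sup_of_le_left (le_sup_of_le_left le_sup_left)
      · exact le_sup_of_le_left (le_sup_of_le_left le_sup_right)
      · exact le_sup_of_le_right le_sup_right
    rw [this, Submodule.dualAnnihilator_top]
  -- distinctness
  have neLLl : L ≠ Lleft := by
    intro he
    have : L = ⊥ := by rw [← iLLl, he, inf_idem]
    rw [this] at dL; simp at dL
  have neLLr : L ≠ Lright := by
    intro he
    have : L = ⊥ := by rw [← iLLr, he, inf_idem]
    rw [this] at dL; simp at dL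
  have neLlLr : Lleft ≠ Lright := by
    intro he
    have : Lleft = ⊥ := by rw [← iLlLr, he, inf_idem]
    rw [this] at dLl; simp at dLl
  -- Lleft ⊔ Lright = P
  have hsupP : Lleft ⊔ Lright = P := by
    apply Submodule.eq_of_le_of_finrank_eq (sup_le hLlP hLrP)
    have := Submodule.finrank_sup_add_finrank_inf_eq Lleft Lright
    rw [iLlLr] at this
    simp only [finrank_bot] at this
    omega
  refine ⟨neLLl, neLLr, neLlLr, hLP, hLlP, hLrP, dP, ?_⟩
  intro u hu hu0
  have hmem : -u ∈ Lleft ⊔ Lright := by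
    rw [hsupP]
    exact P.neg_mem (hLP hu)
  obtain ⟨y, hy, z, hz, hyz⟩ := Submodule.mem_sup.mp hmem
  have hy0 : y ≠ 0 := by
    intro h0
    apply hu0
    have : u = -z := by rw [h0, zero_add] at hyz; rw [hyz, neg_neg]
    have hmem2 : u ∈ L ⊓ Lright := ⟨hu, this ▸ Lright.neg_mem hz⟩
    rw [iLLr] at hmem2
    exact hmem2
  have hz0 : z ≠ 0 := by
    intro h0
    apply hu0
    have : u = -y := by rw [h0, add_zero] at hyz; rw [hyz, neg_neg]
    have hmem2 : u ∈ L ⊓ Lleft := ⟨hu, this ▸ Lleft.neg_mem hy⟩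
    rw [iLLl] at hmem2
    exact hmem2
  refine ⟨(y, z), ⟨hy, hz, hy0, hz0, by rw [add_assoc, hyz, add_neg_cancel]⟩, ?_⟩
  rintro ⟨a, b⟩ ⟨ha, hb, -, -, hab⟩
  have hab' : a + b = -u := by
    rw [add_assoc] at hab
    exact eq_neg_of_add_eq_zero_right hab
  have hdiff : a - y ∈ Lleft ⊓ Lright := by
    refine ⟨Lleft.sub_mem ha hy, ?_⟩
    have heq : a - y = z - b := by
      rw [sub_eq_sub_iff_add_eq_add, hab', ← hyz]
      abel
    rw [heq]
    exact Lright.sub_mem hz hb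
  rw [iLlLr] at hdiff
  have ha' : a = y := sub_eq_zero.mp hdiff
  have hb' : b = z := by
    have : a + b = a + z := by rw [hab', ha', hyz]
    exact add_left_cancel this
  simp [ha', hb']
end

section
/- The Fock-Goncharov triangle invariant satisfies the cyclic symmetry τ_{abc}(E, F, G) = τ_{cab}(G, E, F) for every maximum span flag triple (E, F, G) and every interior vertex (a, b, c) of Θ_n. -/
/-- The wedge product `e^(a) ∧ f^(b) ∧ g^(c)` (with `c = n - a - b`) of the generators of the
exterior powers of the flag subspaces, computed as a determinant with respect to the basis `B`. -/
noncomputable def wDet {V : Type*} [AddCommGroup V] [Module ℂ V] {n : ℕ}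
    (B : Module.Basis (Fin n) ℂ V) (e f g : ℕ → V) (a b : ℕ) : ℂ :=
  B.det (fun i : Fin n =>
    if (i : ℕ) < a then e (i : ℕ)
    else if (i : ℕ) < a + b then f ((i : ℕ) - a)
    else g ((i : ℕ) - a - b))

/-- The Fock-Goncharov triangle invariant `τ_{abc}(E, F, G)` (with `c = n - a - b`), defined from
generating vectors `e, f, g` of the flags `E, F, G`. -/
noncomputable def triInv {V : Type*} [AddCommGroup V] [Module ℂ V] {n : ℕ}
    (B : Module.Basis (Fin n) ℂ V) (e f g : ℕ → V) (a b : ℕ) : ℂ :=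
  (wDet B e f g (a - 1) (b + 1) / wDet B e f g (a + 1) (b - 1)) *
  (wDet B e f g a (b - 1) / wDet B e f g a (b + 1)) *
  (wDet B e f g (a + 1) b / wDet B e f g (a - 1) b)

/-!
Passing from `(e, f, g)` to `(g, e, f)` permutes the columns of each determinant `wDet` by a power
of the cyclic rotation of `Fin n`, whose sign `(-1) ^ ((n - 1) * c)` depends only on the parity of
the length `c` of the moved `g`-block. In each of the three ratios of `τ_{cab}(G, E, F)` the two
`c`-values differ by `0` or `2`, so the signs cancel, and the three ratios become those of
`τ_{abc}(E, F, G)` in cyclic order.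
-/

lemma val_finRotate_pow_apply {n : ℕ} (k : ℕ) (i : Fin n) :
    ((finRotate n ^ k) i : ℕ) = (i + k) % n := by
  induction k with
  | zero => simp [Nat.mod_eq_of_lt i.isLt]
  | succ k ih =>
    obtain ⟨m, rfl⟩ : ∃ m, n = m + 1 := ⟨n - 1, by have := i.isLt; omega⟩
    rw [pow_succ', Equiv.Perm.mul_apply, finRotate_apply, Fin.val_add, ih]
    simp [Nat.add_mod, ← add_assoc]

lemma Module.Basis.det_apply_add_mod {R M : Type*} [CommRing R] [AddCommGroup M] [Module R M]
    {n : ℕ} (B : Module.Basis (Fin n) R M) (u : ℕ → M) (k : ℕ) :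
    B.det (fun i : Fin n => u ((i + k) % n)) =
      (-1) ^ ((n - 1) * k) * B.det (fun i : Fin n => u i) := by
  have hrotate :
      (fun i : Fin n => u ((i + k) % n)) = (fun i : Fin n => u i) ∘ (finRotate n ^ k) := by
    funext i
    simp [val_finRotate_pow_apply]
  rw [hrotate, AlternatingMap.map_perm, map_pow, sign_finRotate, ← pow_mul, Units.smul_def,
    zsmul_eq_mul]
  push_cast
  rfl

section FlagFamily

variable {V : Type*}

def flagFamily (e f g : ℕ → V) (a b : ℕ) (j : ℕ) : V :=
  if j < a then e j else if j < a + b then f (j - a) else g (j - a - b)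

lemma flagFamily_add_mod {e f g : ℕ → V} {a b c n j : ℕ} (habc : a + b + c = n) (hj : j < n) :
    flagFamily g e f c a ((j + c) % n) = flagFamily e f g a b j := by
  unfold flagFamily
  rcases lt_or_ge j (a + b) with hab | hab
  · rw [Nat.mod_eq_of_lt (by omega), if_neg (by omega)]
    rcases lt_or_ge j a with ha | ha
    · rw [if_pos (by omega), if_pos ha, Nat.add_sub_cancel]
    · rw [if_neg (by omega), if_neg (by omega), if_pos hab]
      congr 1
      omega
  · have hmod : (j + c) % n = j - a - b := by
      rw [show j + c = j - a - b + n by omega, Nat.add_mod_right, Nat.mod_eq_of_lt (by omega)]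
    rw [hmod, if_pos (by omega), if_neg (by omega), if_neg (by omega)]

variable [AddCommGroup V] [Module ℂ V]

lemma wDet_eq_det_flagFamily {n : ℕ} (B : Module.Basis (Fin n) ℂ V) (e f g : ℕ → V)
    (a b : ℕ) :
    wDet B e f g a b = B.det (fun i : Fin n => flagFamily e f g a b i) :=
  rfl

lemma wDet_eq_mul_wDet_rotate {n : ℕ} (B : Module.Basis (Fin n) ℂ V) (e f g : ℕ → V)
    {a b c : ℕ} (habc : a + b + c = n) :
    wDet B e f g a b = (-1) ^ ((n - 1) * c) * wDet B g e f c a := by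
  have hcols : (fun i : Fin n => flagFamily g e f c a ((i + c) % n)) =
      fun i : Fin n => flagFamily e f g a b i := by
    funext i
    exact flagFamily_add_mod habc i.isLt
  rw [wDet_eq_det_flagFamily, wDet_eq_det_flagFamily, ← B.det_apply_add_mod, hcols]

lemma wDet_div_wDet_eq_rotate {n : ℕ} (B : Module.Basis (Fin n) ℂ V) (e f g : ℕ → V)
    {a b c a' b' c' : ℕ} (habc : a + b + c = n) (habc' : a' + b' + c' = n)
    (hc : c ≡ c' [MOD 2]) :
    wDet B e f g a b / wDet B e f g a' b' = wDet B g e f c a / wDet B g e f c' a' := by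
  have hsign : (-1 : ℂ) ^ ((n - 1) * c') = (-1) ^ ((n - 1) * c) := by
    rw [mul_comm, pow_mul, mul_comm, pow_mul, neg_one_pow_eq_pow_mod_two (n := c),
      neg_one_pow_eq_pow_mod_two (n := c'), hc]
  rw [wDet_eq_mul_wDet_rotate B e f g habc, wDet_eq_mul_wDet_rotate B e f g habc', hsign,
    mul_div_mul_left _ _ (pow_ne_zero _ (neg_ne_zero.mpr one_ne_zero))]

end FlagFamily

theorem triangle_invariant_cyclic_symmetry_general {V : Type*} [AddCommGroup V] [Module ℂ V]
    (n : ℕ) (B : Module.Basis (Fin n) ℂ V) (e f g : ℕ → V)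
    (a b c : ℕ) (habc : a + b + c = n) (ha : 0 < a) (hb : 0 < b) (hc : 0 < c) :
    triInv B e f g a b = triInv B g e f c a := by
  have hparity : c + 1 ≡ c - 1 [MOD 2] := by unfold Nat.ModEq; omega
  unfold triInv
  rw [wDet_div_wDet_eq_rotate B e f g (c := c) (c' := c) (by omega) (by omega) rfl,
    wDet_div_wDet_eq_rotate B e f g (c := c + 1) (c' := c - 1) (by omega) (by omega) hparity,
    wDet_div_wDet_eq_rotate B e f g (c := c - 1) (c' := c + 1) (by omega) (by omega) hparity.symm]
  ring

theorem triangle_invariant_cyclic_symmetry {V : Type*} [AddCommGroup V] [Module ℂ V]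
    (n : ℕ) (B : Module.Basis (Fin n) ℂ V) (e f g : ℕ → V)
    (hmax : ∀ a b, a + b ≤ n → wDet B e f g a b ≠ 0)
    (a b c : ℕ) (habc : a + b + c = n) (ha : 0 < a) (hb : 0 < b) (hc : 0 < c) :
    triInv B e f g a b = triInv B g e f c a :=
  triangle_invariant_cyclic_symmetry_general n B e f g a b c habc ha hb hc
end
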